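/- arXiv:1611.07354 — 3 statements merged into one kernel-verified Lean document; each statement's English description precedes it below -/
import Mathlib

section
/- For all integers d ≥ 2 and n ≥ d, every dual graph of type (d,n) has diameter at most 2^{d−2}·(n−d); that is, μ(d,n) ≤ 2^{d−2}(n−d). -/
/-!
Fix vertices `u`, `v` at distance `k` and sort the vertices by their distance `j ≤ k` from `u`
into layers `L₀, …, L_k`. By property (i), a set contained in members of layers `i ≤ l` is
contained in a member of every layer in between, and members of layers at least two apart meet
in at most `d - 2` symbols. For such a layered family of `d`-sets using `N` symbols we show
`k ≤ 2^(d-2) (N - d)` by induction on `d`. For `d = 2`, every layer brings a new symbol. For the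
induction step let `t` be the last layer with a member meeting a member of `L₀`, say in `s`: the
links at `s` of the layers `0, …, t` form a layered family of `(d-1)`-sets avoiding `s`, and the
layers `t+1, …, k` are treated recursively. The symbols of `L₀` do not occur after layer `t`, and
the symbols shared by the two parts all occur in `L_{t+1}`; to make this bookkeeping close up, the
induction on `k` carries the stronger invariant `k ≤ 2^(d-3) (2N - d - |⋃ L₀|)`.
-/

open SimpleGraph

/-- The graph on a family `V` of subsets of `{1,…,n}` in which two distinct
members are adjacent iff their intersection has `d - 1` elements
(property (ii) of a dual graph of type `(d,n)`). -/
def adjGraph (n d : ℕ) (V : Finset (Finset (Fin n))) :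
    SimpleGraph {u : Finset (Fin n) // u ∈ V} where
  Adj u v := u ≠ v ∧ (u.1 ∩ v.1).card = d - 1
  symm := ⟨by
    rintro u v ⟨h1, h2⟩
    exact ⟨h1.symm, by rwa [Finset.inter_comm]⟩⟩
  loopless := ⟨fun u h => h.1 rfl⟩

/-- `V` is (the vertex set of) a dual graph of type `(d,n)`:
a nonempty family of `d`-element subsets of `{1,…,n}` such that, with adjacency
given by property (ii), any two vertices `u`, `v` are joined by a walk all of
whose vertices contain `u ∩ v` (property (i)). -/
structure IsDualGraph (d n : ℕ) (V : Finset (Finset (Fin n))) : Prop where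
  nonempty : V.Nonempty
  card_eq : ∀ u ∈ V, u.card = d
  locally_connected : ∀ u v : {x : Finset (Fin n) // x ∈ V},
    ∃ w : (adjGraph n d V).Walk u v, ∀ x ∈ w.support, u.1 ∩ v.1 ⊆ x.1

namespace DualGraph

open Finset

variable {α : Type*} [DecidableEq α]

def atoms (L : ℕ → Finset (Finset α)) (k : ℕ) : Finset α :=
  (range (k + 1)).biUnion fun j => (L j).biUnion id

structure IsLayeredFamily (d k : ℕ) (L : ℕ → Finset (Finset α)) : Prop where
  nonempty : ∀ ⦃j⦄, j ≤ k → (L j).Nonempty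
  card_eq : ∀ ⦃j⦄, j ≤ k → ∀ ⦃x⦄, x ∈ L j → x.card = d
  exists_superset : ∀ ⦃A : Finset α⦄ ⦃i j l : ℕ⦄, i ≤ j → j ≤ l → l ≤ k →
    (∃ x ∈ L i, A ⊆ x) → (∃ y ∈ L l, A ⊆ y) → ∃ z ∈ L j, A ⊆ z
  ne : ∀ ⦃i j⦄, i < j → j ≤ k → ∀ ⦃x⦄, x ∈ L i → ∀ ⦃y⦄, y ∈ L j → x ≠ y
  card_inter_add_two_le : ∀ ⦃i j⦄, i + 2 ≤ j → j ≤ k →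
    ∀ ⦃x⦄, x ∈ L i → ∀ ⦃y⦄, y ∈ L j → (x ∩ y).card + 2 ≤ d

variable {L : ℕ → Finset (Finset α)} {d k : ℕ}

lemma mem_atoms {s : α} : s ∈ atoms L k ↔ ∃ j ≤ k, ∃ x ∈ L j, s ∈ x := by
  simp [atoms]

lemma subset_atoms {j : ℕ} (hj : j ≤ k) {x : Finset α} (hx : x ∈ L j) : x ⊆ atoms L k :=
  fun _ hs => mem_atoms.mpr ⟨j, hj, x, hx, hs⟩

lemma atoms_mono {j : ℕ} (hj : j ≤ k) : atoms L j ⊆ atoms L k := fun _ hs => by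
  obtain ⟨i, hi, x, hx, hs⟩ := mem_atoms.mp hs
  exact subset_atoms (hi.trans hj) hx hs

lemma atoms_add (L : ℕ → Finset (Finset α)) (t m : ℕ) :
    atoms L (t + 1 + m) = atoms L t ∪ atoms (fun j => L (t + 1 + j)) m := by
  ext s
  simp only [mem_union, mem_atoms]
  constructor
  · rintro ⟨j, hj, x, hx, hs⟩
    rcases le_or_gt j t with hjt | hjt
    · exact Or.inl ⟨j, hjt, x, hx, hs⟩
    · refine Or.inr ⟨j - (t + 1), by omega, x, ?_, hs⟩
      rwa [show t + 1 + (j - (t + 1)) = j by omega]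
  · rintro (⟨j, hj, x, hx, hs⟩ | ⟨j, hj, x, hx, hs⟩)
    · exact ⟨j, by omega, x, hx, hs⟩
    · exact ⟨t + 1 + j, by omega, x, hx, hs⟩

lemma card_add_le_card_biUnion_range {x : ℕ → Finset α}
    (hnew : ∀ j < k, ∃ s ∈ x (j + 1), ∀ i ≤ j, s ∉ x i) :
    k + (x 0).card ≤ ((range (k + 1)).biUnion x).card := by
  induction k with
  | zero => simp
  | succ k ih =>
    obtain ⟨s, hsx, hs⟩ := hnew k (Nat.lt_succ_self k)
    have hs' : s ∉ (range (k + 1)).biUnion x := by simpa [Nat.lt_succ_iff] using hs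
    calc k + 1 + (x 0).card ≤ ((range (k + 1)).biUnion x).card + 1 := by
          linarith [ih fun j hj => hnew j (by omega)]
      _ = (insert s ((range (k + 1)).biUnion x)).card := (card_insert_of_notMem hs').symm
      _ ≤ ((range (k + 1 + 1)).biUnion x).card := by
          rw [range_add_one (n := k + 1), biUnion_insert]
          exact card_le_card (insert_subset (mem_union_left _ hsx) subset_union_right)

def link (L : ℕ → Finset (Finset α)) (s : α) (j : ℕ) : Finset (Finset α) :=
  ((L j).filter (s ∈ ·)).image (·.erase s)

lemma mem_link {s : α} {j : ℕ} {y : Finset α} :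
    y ∈ link L s j ↔ ∃ x ∈ L j, s ∈ x ∧ x.erase s = y := by
  simp [link, and_assoc]

lemma atoms_link_subset (s : α) : atoms (link L s) k ⊆ (atoms L k).erase s := by
  intro a ha
  obtain ⟨j, hj, y, hy, hay⟩ := mem_atoms.mp ha
  obtain ⟨x, hx, -, rfl⟩ := mem_link.mp hy
  exact mem_erase.mpr ⟨ne_of_mem_erase hay, subset_atoms hj hx (mem_of_mem_erase hay)⟩

namespace IsLayeredFamily

lemma card_le_card_atoms (h : IsLayeredFamily d k L) : d ≤ (atoms L k).card := by
  obtain ⟨x, hx⟩ := h.nonempty (Nat.zero_le k)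
  exact h.card_eq (Nat.zero_le k) hx ▸ card_le_card (subset_atoms (Nat.zero_le k) hx)

lemma mono (h : IsLayeredFamily d k L) {k' : ℕ} (hk : k' ≤ k) : IsLayeredFamily d k' L where
  nonempty _ hj := h.nonempty (hj.trans hk)
  card_eq _ hj := h.card_eq (hj.trans hk)
  exists_superset _ _ _ _ hij hjl hl := h.exists_superset hij hjl (hl.trans hk)
  ne _ _ hij hj := h.ne hij (hj.trans hk)
  card_inter_add_two_le _ _ hij hj := h.card_inter_add_two_le hij (hj.trans hk)

lemma shift (h : IsLayeredFamily d k L) {a m : ℕ} (hk : a + m ≤ k) :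
    IsLayeredFamily d m (fun j => L (a + j)) where
  nonempty _ hj := h.nonempty (by omega)
  card_eq _ hj := h.card_eq (by omega)
  exists_superset _ _ _ _ hij hjl hl := h.exists_superset (by omega) (by omega) (by omega)
  ne _ _ hij hj := h.ne (by omega) (by omega)
  card_inter_add_two_le _ _ hij hj := h.card_inter_add_two_le (by omega) (by omega)

lemma inter_atoms_subset {t m : ℕ} (h : IsLayeredFamily d (t + 1 + m) L) :
    atoms L t ∩ atoms (fun j => L (t + 1 + j)) m ⊆ atoms (fun j => L (t + 1 + j)) 0 := by
  intro s hs
  obtain ⟨i, hi, x, hx, hsx⟩ := mem_atoms.mp (mem_inter.mp hs).1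
  obtain ⟨j, hj, y, hy, hsy⟩ := mem_atoms.mp (mem_inter.mp hs).2
  obtain ⟨z, hz, hsz⟩ := h.exists_superset (A := {s}) (j := t + 1) (by omega) (by omega)
    (by omega) ⟨x, hx, singleton_subset_iff.mpr hsx⟩ ⟨y, hy, singleton_subset_iff.mpr hsy⟩
  exact subset_atoms (j := 0) le_rfl hz (singleton_subset_iff.mp hsz)

lemma length_add_two_le (h : IsLayeredFamily 2 k L) : k + 2 ≤ (atoms L k).card := by
  choose! x hx using fun j (hj : j ≤ k) => h.nonempty hj
  have hnew : ∀ j < k, ∃ s ∈ x (j + 1), ∀ i ≤ j, s ∉ x i := by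
    intro j hj
    have hcard : (x j).card ≤ (x (j + 1)).card := by
      rw [h.card_eq hj (hx (j + 1) hj), h.card_eq (by omega) (hx j (by omega))]
    obtain ⟨s, hs, hsj⟩ := not_subset.mp fun hsub : x (j + 1) ⊆ x j =>
      h.ne (Nat.lt_succ_self j) hj (hx j (by omega)) (hx (j + 1) hj)
        (eq_of_subset_of_card_le hsub hcard).symm
    refine ⟨s, hs, fun i hi hsi => ?_⟩
    rcases hi.lt_or_eq with hi | rfl
    · have hfar := h.card_inter_add_two_le (i := i) (by omega) hj (hx i (by omega)) (hx (j + 1) hj)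
      have := card_pos.mpr ⟨s, mem_inter.mpr ⟨hsi, hs⟩⟩
      omega
    · exact hsj hsi
  calc k + 2 = k + (x 0).card := by rw [h.card_eq (Nat.zero_le k) (hx 0 (Nat.zero_le k))]
    _ ≤ ((range (k + 1)).biUnion x).card := card_add_le_card_biUnion_range hnew
    _ ≤ (atoms L k).card := card_le_card <| biUnion_subset.mpr fun j hj =>
          subset_atoms (Nat.lt_succ_iff.mp (mem_range.mp hj)) (hx j (Nat.lt_succ_iff.mp (mem_range.mp hj)))

lemma link (h : IsLayeredFamily (d + 1) k L) {s : α} (h0 : ∃ x ∈ L 0, s ∈ x)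
    (hk : ∃ y ∈ L k, s ∈ y) : IsLayeredFamily d k (link L s) where
  nonempty j hj := by
    obtain ⟨x, hx, hsx⟩ := h0
    obtain ⟨y, hy, hsy⟩ := hk
    obtain ⟨z, hz, hsz⟩ := h.exists_superset (A := {s}) (Nat.zero_le j) hj le_rfl
      ⟨x, hx, singleton_subset_iff.mpr hsx⟩ ⟨y, hy, singleton_subset_iff.mpr hsy⟩
    exact ⟨z.erase s, mem_link.mpr ⟨z, hz, singleton_subset_iff.mp hsz, rfl⟩⟩
  card_eq j hj y hy := by
    obtain ⟨x, hx, hsx, rfl⟩ := mem_link.mp hy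
    rw [card_erase_of_mem hsx, h.card_eq hj hx, Nat.add_sub_cancel]
  exists_superset A i j l hij hjl hl := by
    rintro ⟨_, hx', hAx⟩ ⟨_, hy', hAy⟩
    obtain ⟨x, hx, hsx, rfl⟩ := mem_link.mp hx'
    obtain ⟨y, hy, hsy, rfl⟩ := mem_link.mp hy'
    have hsA : s ∉ A := fun hs => (mem_erase.mp (hAx hs)).1 rfl
    obtain ⟨z, hz, hAz⟩ := h.exists_superset (A := insert s A) hij hjl hl
      ⟨x, hx, insert_subset hsx (hAx.trans (erase_subset _ _))⟩
      ⟨y, hy, insert_subset hsy (hAy.trans (erase_subset _ _))⟩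
    refine ⟨z.erase s, mem_link.mpr ⟨z, hz, hAz (mem_insert_self _ _), rfl⟩, ?_⟩
    rw [← erase_eq_of_notMem hsA]
    exact erase_subset_erase s (hAz.trans' (subset_insert s A))
  ne i j hij hj x' hx' y' hy' := by
    obtain ⟨x, hx, hsx, rfl⟩ := mem_link.mp hx'
    obtain ⟨y, hy, hsy, rfl⟩ := mem_link.mp hy'
    intro hxy
    refine h.ne hij hj hx hy ?_
    rw [← insert_erase hsx, ← insert_erase hsy, hxy]
  card_inter_add_two_le i j hij hj x' hx' y' hy' := by
    obtain ⟨x, hx, hsx, rfl⟩ := mem_link.mp hx'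
    obtain ⟨y, hy, hsy, rfl⟩ := mem_link.mp hy'
    have hs : s ∈ x ∩ y := mem_inter.mpr ⟨hsx, hsy⟩
    have := h.card_inter_add_two_le hij hj hx hy
    rw [erase_inter, inter_erase, erase_idem, card_erase_of_mem hs]
    have := card_pos.mpr ⟨s, hs⟩
    omega

lemma length_add_le_of_mem_inter {c : ℕ}
    (hlow : ∀ k (L : ℕ → Finset (Finset α)), IsLayeredFamily (c + 2) k L →
      k + 2 ^ c * (c + 2) ≤ 2 ^ c * (atoms L k).card)
    (h : IsLayeredFamily (c + 3) k L) {x y : Finset α} (hx : x ∈ L 0) (hy : y ∈ L k) {s : α}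
    (hs : s ∈ x ∩ y) : k + 2 ^ c * (c + 3) ≤ 2 ^ c * (atoms L k).card := by
  rw [mem_inter] at hs
  have hlink := hlow k _ (h.link ⟨x, hx, hs.1⟩ ⟨y, hy, hs.2⟩)
  have hlt : (atoms (DualGraph.link L s) k).card + 1 ≤ (atoms L k).card :=
    (card_le_card (atoms_link_subset s)).trans_lt
      (card_erase_lt_of_mem (subset_atoms (Nat.zero_le k) hx hs.1))
  nlinarith [Nat.mul_le_mul_left (2 ^ c) hlt]

lemma length_add_le_two_pow_mul {c : ℕ}
    (hlow : ∀ k (L : ℕ → Finset (Finset α)), IsLayeredFamily (c + 2) k L →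
      k + 2 ^ c * (c + 2) ≤ 2 ^ c * (atoms L k).card)
    (h : IsLayeredFamily (c + 3) k L) :
    k + 2 ^ c * (c + 3 + (atoms L 0).card) ≤ 2 ^ (c + 1) * (atoms L k).card := by
  classical
  induction k using Nat.strong_induction_on generalizing L with
  | _ k ih =>
  let Meets l := ∃ x ∈ L 0, ∃ y ∈ L l, (x ∩ y).Nonempty
  have hmeets0 : Meets 0 := by
    obtain ⟨x, hx⟩ := h.nonempty (Nat.zero_le k)
    have := h.card_eq (Nat.zero_le k) hx
    exact ⟨x, hx, x, hx, by rw [inter_self, ← card_pos]; omega⟩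
  obtain ⟨x, hx, y, hy, s, hs⟩ := Nat.findGreatest_spec (Nat.zero_le k) hmeets0
  have htk : Nat.findGreatest Meets k ≤ k := Nat.findGreatest_le k
  have hmax : ∀ l ≤ k, Meets l → l ≤ Nat.findGreatest Meets k := fun _ => Nat.le_findGreatest
  generalize Nat.findGreatest Meets k = t at hy hs htk hmax
  have hfirst := (h.mono htk).length_add_le_of_mem_inter hlow hx hy hs
  have hA0 := card_le_card (atoms_mono (L := L) (Nat.zero_le t))
  have hp : 1 ≤ 2 ^ c := Nat.one_le_two_pow
  rcases htk.eq_or_lt with rfl | htk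
  · rw [pow_succ]
    nlinarith [Nat.mul_le_mul_left (2 ^ c) hA0]
  obtain ⟨m, rfl⟩ : ∃ m, k = t + 1 + m := ⟨k - (t + 1), by omega⟩
  set L' : ℕ → Finset (Finset α) := fun j => L (t + 1 + j)
  have hrest := ih m (by omega) (h.shift le_rfl)
  have hdisj : Disjoint (atoms L 0) (atoms L' m) := by
    rw [Finset.disjoint_left]
    intro a ha ha'
    obtain ⟨i, hi, x, hx, hax⟩ := mem_atoms.mp ha
    obtain ⟨j, hj, y, hy, hay⟩ := mem_atoms.mp ha'
    obtain rfl : i = 0 := Nat.le_zero.mp hi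
    have := hmax (t + 1 + j) (by omega) ⟨x, hx, y, hy, a, mem_inter.mpr ⟨hax, hay⟩⟩
    omega
  have hunion := card_union_add_card_inter (atoms L t) (atoms L' m)
  rw [← atoms_add] at hunion
  have hfront : (atoms L 0).card + (atoms L t ∩ atoms L' m).card ≤ (atoms L t).card := by
    rw [← card_union_of_disjoint (hdisj.mono_right inter_subset_right)]
    exact card_le_card (union_subset (atoms_mono (Nat.zero_le t)) inter_subset_left)
  have hshared := card_le_card h.inter_atoms_subset
  rw [pow_succ] at hrest ⊢
  nlinarith [Nat.mul_le_mul_left (2 ^ c) hfront, Nat.mul_le_mul_left (2 ^ c) hshared]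

theorem length_add_mul_le (c : ℕ) {k : ℕ} {L : ℕ → Finset (Finset α)}
    (h : IsLayeredFamily (c + 2) k L) : k + 2 ^ c * (c + 2) ≤ 2 ^ c * (atoms L k).card := by
  induction c generalizing k L with
  | zero => simpa using h.length_add_two_le
  | succ c ih =>
    have hstep := length_add_le_two_pow_mul (fun _ _ => ih) h
    have hd := (h.mono (Nat.zero_le k)).card_le_card_atoms
    rw [pow_succ] at hstep ⊢
    nlinarith [Nat.mul_le_mul_left (2 ^ c) hd]

theorem length_le (hd : 2 ≤ d) (h : IsLayeredFamily d k L) :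
    k ≤ 2 ^ (d - 2) * ((atoms L k).card - d) := by
  obtain ⟨c, rfl⟩ : ∃ c, d = c + 2 := ⟨d - 2, by omega⟩
  have := h.length_add_mul_le c
  rw [Nat.add_sub_cancel, Nat.mul_sub]
  omega

end IsLayeredFamily

end DualGraph

lemma SimpleGraph.Walk.exists_mem_support_dist_eq {β : Type*} {G : SimpleGraph β} {u x y : β} (w : G.Walk x y)
    {j : ℕ} (hx : G.dist u x ≤ j) (hy : j ≤ G.dist u y) : ∃ z ∈ w.support, G.dist u z = j := by
  rcases hx.eq_or_lt with hx | hx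
  · exact ⟨x, w.start_mem_support, hx⟩
  obtain ⟨e, he, hlt, hge⟩ :=
    w.exists_boundary_dart {z | G.dist u z < j} hx (by simpa using hy)
  refine ⟨e.snd, w.dart_snd_mem_support_of_mem_darts he, ?_⟩
  have := e.adj.diff_dist_adj (u := u)
  change G.dist u e.fst < j at hlt
  change ¬G.dist u e.snd < j at hge
  omega

namespace DualGraph

variable {α : Type*} {V : Finset (Finset α)}

open Classical in
noncomputable def distLayer (G : SimpleGraph {x // x ∈ V}) (u : {x // x ∈ V}) (j : ℕ) :
    Finset (Finset α) :=
  (V.attach.filter fun x => G.dist u x = j).map (Function.Embedding.subtype _)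

lemma mem_distLayer {G : SimpleGraph {x // x ∈ V}} {u : {x // x ∈ V}} {j : ℕ} {x : Finset α} :
    x ∈ distLayer G u j ↔ ∃ hx : x ∈ V, G.dist u ⟨x, hx⟩ = j := by
  simp [distLayer]

end DualGraph

section DualGraphLayers

open DualGraph Finset

variable {d n : ℕ} {V : Finset (Finset (Fin n))}

lemma IsDualGraph.card_inter_add_two_le (hV : IsDualGraph d n V) {x y : {x // x ∈ V}}
    (hne : x ≠ y) (hadj : ¬(adjGraph n d V).Adj x y) : (x.1 ∩ y.1).card + 2 ≤ d := by
  have hx := hV.card_eq x.1 x.2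
  have hy := hV.card_eq y.1 y.2
  have hle := card_le_card (inter_subset_left (s₁ := x.1) (s₂ := y.1))
  have hnd : (x.1 ∩ y.1).card ≠ d := fun h =>
    hne (Subtype.ext (eq_of_subset_of_card_le (inter_eq_left.mp
      (eq_of_subset_of_card_le inter_subset_left (by omega))) (by omega)))
  have hnd' : (x.1 ∩ y.1).card ≠ d - 1 := fun h => hadj ⟨hne, h⟩
  omega

lemma IsDualGraph.isLayeredFamily (hV : IsDualGraph d n V) (u v : {x // x ∈ V}) :
    IsLayeredFamily d ((adjGraph n d V).dist u v) (distLayer (adjGraph n d V) u) where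
  nonempty j hj := by
    obtain ⟨w, -⟩ := hV.locally_connected u v
    obtain ⟨z, -, hz⟩ := w.exists_mem_support_dist_eq (by simp) hj
    exact ⟨z.1, mem_distLayer.mpr ⟨z.2, hz⟩⟩
  card_eq j _ x hx := hV.card_eq x (mem_distLayer.mp hx).1
  exists_superset A i j l hij hjl _ := by
    rintro ⟨x, hx, hAx⟩ ⟨y, hy, hAy⟩
    obtain ⟨hxV, rfl⟩ := mem_distLayer.mp hx
    obtain ⟨hyV, rfl⟩ := mem_distLayer.mp hy
    obtain ⟨w, hw⟩ := hV.locally_connected ⟨x, hxV⟩ ⟨y, hyV⟩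
    obtain ⟨z, hz, hzj⟩ := w.exists_mem_support_dist_eq hij hjl
    exact ⟨z.1, mem_distLayer.mpr ⟨z.2, hzj⟩, (subset_inter hAx hAy).trans (hw z hz)⟩
  ne i j hij _ x hx y hy := by
    obtain ⟨hxV, hi⟩ := mem_distLayer.mp hx
    obtain ⟨hyV, hj⟩ := mem_distLayer.mp hy
    rintro rfl
    omega
  card_inter_add_two_le i j hij _ x hx y hy := by
    obtain ⟨hxV, hi⟩ := mem_distLayer.mp hx
    obtain ⟨hyV, hj⟩ := mem_distLayer.mp hy
    refine hV.card_inter_add_two_le (x := ⟨x, hxV⟩) (y := ⟨y, hyV⟩) (fun h => ?_) (fun h => ?_)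
    · rw [h] at hi
      omega
    · have := h.diff_dist_adj (u := u)
      omega

end DualGraphLayers

theorem mu_le_pow_general (d n : ℕ) (hd : 2 ≤ d)
    (V : Finset (Finset (Fin n))) (hV : IsDualGraph d n V) :
    (adjGraph n d V).diam ≤ 2 ^ (d - 2) * (n - d) := by
  refine ENat.toNat_le_of_le_natCast (ediam_le_of_edist_le fun u v => ?_)
  obtain ⟨w, -⟩ := hV.locally_connected u v
  rw [← w.reachable.coe_dist_eq_edist, Nat.cast_le]
  refine ((hV.isLayeredFamily u v).length_le hd).trans ?_
  gcongr
  exact (Finset.card_le_univ _).trans_eq (Fintype.card_fin n)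

/-- μ(d,n) ≤ 2^(d−2)·(n−d) for all d ≥ 2 and n ≥ d. -/
theorem mu_le_pow (d n : ℕ) (hd : 2 ≤ d) (hn : d ≤ n)
    (V : Finset (Finset (Fin n))) (hV : IsDualGraph d n V) :
    (adjGraph n d V).diam ≤ 2 ^ (d - 2) * (n - d) :=
  mu_le_pow_general d n hd V hV
end

section
/- For every integer n ≥ 2, μ(2,n) = n−2: every dual graph of type (2,n) has diameter at most n−2, and there exists a dual graph of type (2,n) whose diameter is exactly n−2. -/
open SimpleGraph

/-!
A vertex of a dual graph of type `(2,n)` is an edge of a graph on `{1,…,n}`, and two vertices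
are adjacent iff they share an endpoint; in particular two distinct vertices that meet are
adjacent, so condition (i) just says the graph is connected. Along a geodesic `u₀, …, u_k`,
non-consecutive vertices are therefore disjoint (otherwise the geodesic could be shortcut), so
each `uᵢ₊₁` has an endpoint outside `u₀ ∪ ⋯ ∪ uᵢ` and the geodesic covers `k + 2 ≤ n` points.
The edges `{i, i + 1}` of the path on `n` vertices attain the bound: their dual graph is the
path on `n - 1` vertices.
-/
namespace SimpleGraph

variable {α : Type*} {G : SimpleGraph α} {u v : α}

lemma Adj.dist_le_dist_add_one (h : G.Adj u v) (w : α) : G.dist u w ≤ G.dist v w + 1 := by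
  have := h.reachable.dist_triangle_left w
  rw [dist_eq_one_iff_adj.2 h] at this
  omega

lemma Walk.le_add_length_of_adj_le {f : α → ℕ} (hf : ∀ a b, G.Adj a b → f b ≤ f a + 1)
    (p : G.Walk u v) : f v ≤ f u + p.length := by
  induction p with
  | nil => simp
  | cons h q ih =>
    have := hf _ _ h
    rw [Walk.length_cons]
    omega

lemma Reachable.le_add_dist_of_adj_le {f : α → ℕ} (hf : ∀ a b, G.Adj a b → f b ≤ f a + 1)
    (h : G.Reachable u v) : f v ≤ f u + G.dist u v := by
  obtain ⟨p, hp⟩ := h.exists_walk_length_eq_dist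
  exact hp ▸ p.le_add_length_of_adj_le hf

end SimpleGraph

section TwoSets

variable {n : ℕ} {V : Finset (Finset (Fin n))}

lemma adjGraph_two_adj_iff (hV : ∀ u ∈ V, u.card = 2) {u v : {x // x ∈ V}} :
    (adjGraph n 2 V).Adj u v ↔ u ≠ v ∧ ¬Disjoint u.1 v.1 := by
  refine and_congr_right fun hne => ?_
  rw [Finset.not_disjoint_iff_nonempty_inter, ← Finset.card_pos]
  have hle : (u.1 ∩ v.1).card ≤ 2 := hV u u.2 ▸ Finset.card_le_card Finset.inter_subset_left
  have hne2 : (u.1 ∩ v.1).card ≠ 2 := fun h => hne <| Subtype.ext <|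
    calc u.1 = u.1 ∩ v.1 := (Finset.eq_of_subset_of_card_le Finset.inter_subset_left
            (by rw [h, hV u u.2])).symm
      _ = v.1 := Finset.eq_of_subset_of_card_le Finset.inter_subset_right (by rw [h, hV v v.2])
  omega

lemma length_add_two_le_card_biUnion_support (hV : ∀ u ∈ V, u.card = 2)
    {u v : {x // x ∈ V}} (p : (adjGraph n 2 V).Walk u v)
    (hp : p.length = (adjGraph n 2 V).dist u v) :
    p.length + 2 ≤ (p.support.toFinset.biUnion Subtype.val).card := by
  induction p with
  | nil => simp [hV _ (Subtype.property _)]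
  | @cons a b c hab q ih =>
    rw [Walk.length_cons] at hp
    have ha_notMem : a ∉ q.support := ((Walk.cons_isPath_iff hab q).1
      ((Walk.cons hab q).isPath_of_length_eq_dist (by rw [Walk.length_cons, hp]))).2
    have hq : q.length = (adjGraph n 2 V).dist b c := by
      have := hab.dist_le_dist_add_one c
      have := SimpleGraph.dist_le q
      omega
    obtain ⟨x, hxa, hxb⟩ : ∃ x ∈ a.1, x ∉ b.1 := Finset.not_subset.1 fun h => hab.ne <|
      Subtype.ext <| Finset.eq_of_subset_of_card_le h (by rw [hV _ a.2, hV _ b.2])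
    have hx : x ∉ q.support.toFinset.biUnion Subtype.val := by
      simp only [Finset.mem_biUnion, List.mem_toFinset, not_exists, not_and]
      intro w hw hxw
      have hwb : w ≠ b := by rintro rfl; exact hxb hxw
      have haw : (adjGraph n 2 V).Adj a w := (adjGraph_two_adj_iff hV).2
        ⟨by rintro rfl; exact ha_notMem hw, Finset.not_disjoint_iff.2 ⟨x, hxa, hxw⟩⟩
      have := haw.dist_le_dist_add_one c
      have := (SimpleGraph.dist_le (q.dropUntil w hw)).trans_lt
        (Walk.length_dropUntil_lt_length hw hwb)
      omega
    have hsub : insert x (q.support.toFinset.biUnion Subtype.val) ⊆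
        a.1 ∪ q.support.toFinset.biUnion Subtype.val :=
      Finset.insert_subset (Finset.mem_union_left _ hxa) Finset.subset_union_right
    have := Finset.card_le_card hsub
    rw [Finset.card_insert_of_notMem hx] at this
    rw [Walk.support_cons, List.toFinset_cons, Finset.biUnion_insert, Walk.length_cons]
    have := ih hq
    omega

lemma dist_adjGraph_two_le (hV : ∀ u ∈ V, u.card = 2) (u v : {x // x ∈ V}) :
    (adjGraph n 2 V).dist u v ≤ n - 2 := by
  by_cases huv : (adjGraph n 2 V).Reachable u v
  · obtain ⟨p, hp⟩ := huv.exists_walk_length_eq_dist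
    have := length_add_two_le_card_biUnion_support hV p hp
    have := Finset.card_le_univ (p.support.toFinset.biUnion Subtype.val)
    rw [Fintype.card_fin] at this
    omega
  · exact (SimpleGraph.dist_eq_zero_of_not_reachable huv).trans_le (Nat.zero_le _)

lemma diam_adjGraph_two_le (hV : ∀ u ∈ V, u.card = 2) : (adjGraph n 2 V).diam ≤ n - 2 := by
  rcases isEmpty_or_nonempty {x // x ∈ V} with hE | hE
  · simp [SimpleGraph.diam_eq_zero.2 (Or.inr inferInstance)]
  · obtain ⟨u, v, huv⟩ := (adjGraph n 2 V).exists_dist_eq_diam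
    exact huv ▸ dist_adjGraph_two_le hV u v

lemma isDualGraph_two_of_connected (hV : ∀ u ∈ V, u.card = 2)
    (hG : (adjGraph n 2 V).Connected) : IsDualGraph 2 n V where
  nonempty := let ⟨u⟩ := hG.nonempty; ⟨u.1, u.2⟩
  card_eq := hV
  locally_connected u v := by
    by_cases huv : u = v
    · subst huv
      exact ⟨Walk.nil, by simp⟩
    by_cases hdisj : Disjoint u.1 v.1
    · exact ⟨(hG u v).some, fun _ _ => by simp [Finset.disjoint_iff_inter_eq_empty.1 hdisj]⟩
    · have huv := (adjGraph_two_adj_iff hV).2 ⟨huv, hdisj⟩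
      refine ⟨huv.toWalk, ?_⟩
      simp [huv.support_toWalk, Finset.inter_subset_left, Finset.inter_subset_right]

end TwoSets

section PathEdge

variable {m : ℕ}

def pathEdge (i : Fin (m + 1)) : Finset (Fin (m + 2)) := {i.castSucc, i.succ}

lemma mem_pathEdge {i : Fin (m + 1)} {x : Fin (m + 2)} :
    x ∈ pathEdge i ↔ x.val = i.val ∨ x.val = i.val + 1 := by
  simp [pathEdge, Fin.ext_iff]

lemma card_pathEdge (i : Fin (m + 1)) : (pathEdge i).card = 2 :=
  Finset.card_pair (by simp [Fin.ext_iff])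

lemma pathEdge_injective : Function.Injective (pathEdge (m := m)) := by
  intro i j h
  have hi := mem_pathEdge.1 (h ▸ mem_pathEdge.2 (Or.inl rfl) : i.castSucc ∈ pathEdge j)
  have hj := mem_pathEdge.1 (h ▸ mem_pathEdge.2 (Or.inl rfl) : j.castSucc ∈ pathEdge i)
  simp only [Fin.val_castSucc] at hi hj
  omega

lemma not_disjoint_pathEdge_iff {i j : Fin (m + 1)} :
    ¬Disjoint (pathEdge i) (pathEdge j) ↔ i.val ≤ j.val + 1 ∧ j.val ≤ i.val + 1 := by
  rw [Finset.not_disjoint_iff]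
  constructor
  · rintro ⟨x, hxi, hxj⟩
    rw [mem_pathEdge] at hxi hxj
    omega
  · intro h
    rcases le_total i j with hij | hij
    · exact ⟨j.castSucc, mem_pathEdge.2 (by simp; omega), mem_pathEdge.2 (by simp)⟩
    · exact ⟨i.castSucc, mem_pathEdge.2 (by simp), mem_pathEdge.2 (by simp; omega)⟩

end PathEdge

section PathEdges

variable (m : ℕ)

def pathEdges : Finset (Finset (Fin (m + 2))) :=
  Finset.univ.map ⟨pathEdge, pathEdge_injective⟩

lemma card_eq_two_of_mem_pathEdges : ∀ u ∈ pathEdges m, u.card = 2 := by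
  simp [pathEdges, card_pathEdge]

lemma pathEdge_mem_pathEdges (i : Fin (m + 1)) : pathEdge i ∈ pathEdges m :=
  Finset.mem_map_of_mem _ (Finset.mem_univ i)

noncomputable def pathGraphIsoPathEdges :
    pathGraph (m + 1) ≃g adjGraph (m + 2) 2 (pathEdges m) where
  toEquiv := Equiv.ofBijective (fun i => ⟨pathEdge i, pathEdge_mem_pathEdges m i⟩)
    ⟨fun i j h => pathEdge_injective (congrArg Subtype.val h), by
      rintro ⟨u, hu⟩
      obtain ⟨i, -, rfl⟩ := Finset.mem_map.1 hu
      exact ⟨i, rfl⟩⟩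
  map_rel_iff' {i j} := by
    change (adjGraph (m + 2) 2 (pathEdges m)).Adj ⟨pathEdge i, _⟩ ⟨pathEdge j, _⟩ ↔ _
    rw [adjGraph_two_adj_iff (card_eq_two_of_mem_pathEdges m), pathGraph_adj, ne_eq,
      Subtype.mk.injEq, pathEdge_injective.eq_iff, not_disjoint_pathEdge_iff, Fin.ext_iff]
    omega

lemma connected_adjGraph_pathEdges : (adjGraph (m + 2) 2 (pathEdges m)).Connected :=
  (pathGraph_connected m).map (pathGraphIsoPathEdges m).toHom
    (pathGraphIsoPathEdges m).surjective

lemma isDualGraph_pathEdges : IsDualGraph 2 (m + 2) (pathEdges m) :=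
  isDualGraph_two_of_connected (card_eq_two_of_mem_pathEdges m) (connected_adjGraph_pathEdges m)

lemma diam_adjGraph_pathEdges : (adjGraph (m + 2) 2 (pathEdges m)).diam = m := by
  set e := pathGraphIsoPathEdges m
  have hconn := connected_adjGraph_pathEdges m
  have hlower : m ≤ (adjGraph (m + 2) 2 (pathEdges m)).dist (e 0) (e (Fin.last m)) := by
    have hf : ∀ a b, (adjGraph (m + 2) 2 (pathEdges m)).Adj a b →
        (e.symm b).val ≤ (e.symm a).val + 1 := fun a b h => by
      have := pathGraph_adj.1 (e.symm.map_adj_iff.2 h)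
      omega
    simpa using (hconn (e 0) (e (Fin.last m))).le_add_dist_of_adj_le hf
  have : Nonempty {x // x ∈ pathEdges m} := ⟨e 0⟩
  have := diam_adjGraph_two_le (card_eq_two_of_mem_pathEdges m) (n := m + 2)
  have := hlower.trans (SimpleGraph.dist_le_diam (SimpleGraph.connected_iff_ediam_ne_top.1 hconn))
  omega

end PathEdges

/-- μ(2,n) = n − 2 for all n ≥ 2. -/
theorem mu_two (n : ℕ) (hn : 2 ≤ n) :
    (∀ V : Finset (Finset (Fin n)), IsDualGraph 2 n V →
      (adjGraph n 2 V).diam ≤ n - 2) ∧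
    (∃ V : Finset (Finset (Fin n)), IsDualGraph 2 n V ∧
      (adjGraph n 2 V).diam = n - 2) := by
  refine ⟨fun V hV => diam_adjGraph_two_le hV.card_eq, ?_⟩
  obtain ⟨m, rfl⟩ := Nat.exists_eq_add_of_le' hn
  exact ⟨pathEdges m, isDualGraph_pathEdges m, by simpa using diam_adjGraph_pathEdges m⟩
end

section
/- For every integer d ≥ 3, μ(d, d+3) = 3: every dual graph of type (d, d+3) has diameter at most 3, and there exists a dual graph of type (d, d+3) whose diameter is exactly 3. -/
open SimpleGraph

/-!
Adjacent vertices differ in a single element, so `|x ∩ s|` drops by at most one per step of a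
walk and `dist u v ≥ d - |u ∩ v|`. The complements in `Fin (d + 3)` of the triples
`012, 013, 034, 345` form a dual graph that is a path whose ends meet in `d - 3` elements,
so its diameter is at least 3.

Conversely, if `|u ∩ v| ≤ d - 2`, follow a walk from `u` to `v` through vertices containing
`u ∩ v` up to the first vertex `y` with `|y ∩ u| ≤ d - 2`. Its predecessor is within distance 1
of `u`, and counting inside the `d + 3` points (using `u ∩ v ⊆ y`) gives `|y ∩ v| ≥ d - 1`,
so `y` is within distance 1 of `v`.
-/

open Finset

theorem Finset.card_add_card_add_card_le_of_inter_subset {α : Type*} [Fintype α] [DecidableEq α]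
    {u v y : Finset α} (h : u ∩ v ⊆ y) :
    #y + #u + #v ≤ #(y ∩ u) + #(y ∩ v) + Fintype.card α := by
  have hunion : (y ∪ v) ∩ u = y ∩ u := by
    rw [union_inter_distrib_right, inter_comm v u, union_eq_left]
    exact subset_inter h inter_subset_left
  have hsplit := card_inter_add_card_sdiff (y ∪ v) u
  rw [hunion] at hsplit
  have hout : #((y ∪ v) \ u) ≤ Fintype.card α - #u := by
    rw [← card_compl]
    exact card_le_card fun x hx => mem_compl.2 (mem_sdiff.1 hx).2
  have := card_union_add_card_inter y v
  have := card_le_univ u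
  omega

section DualGraph

variable {n d : ℕ} {V : Finset (Finset (Fin n))}

theorem adjGraph.card_inter_le_card_inter_add_one (hV : ∀ u ∈ V, #u = d)
    {x y : {u // u ∈ V}} (hxy : (adjGraph n d V).Adj x y) (s : Finset (Fin n)) :
    #(x.1 ∩ s) ≤ #(y.1 ∩ s) + 1 := by
  have hsdiff : #(x.1 \ y.1) ≤ 1 := by
    have := card_inter_add_card_sdiff x.1 y.1
    have := hxy.2
    have := hV x.1 x.2
    omega
  calc #(x.1 ∩ s) ≤ #((y.1 ∩ s) ∪ (x.1 \ y.1)) := card_le_card fun a ha => by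
          by_cases hay : a ∈ y.1 <;> simp_all
    _ ≤ #(y.1 ∩ s) + #(x.1 \ y.1) := card_union_le _ _
    _ ≤ #(y.1 ∩ s) + 1 := by omega

theorem adjGraph.card_inter_le_card_inter_add_length (hV : ∀ u ∈ V, #u = d)
    {u v : {u // u ∈ V}} (p : (adjGraph n d V).Walk u v) (s : Finset (Fin n)) :
    #(u.1 ∩ s) ≤ #(v.1 ∩ s) + p.length := by
  induction p with
  | nil => simp
  | cons hxy _ ih =>
    have := card_inter_le_card_inter_add_one hV hxy s
    rw [Walk.length_cons]
    omega

theorem adjGraph.sub_card_inter_le_edist (hV : ∀ u ∈ V, #u = d) (u v : {u // u ∈ V}) :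
    ((d - #(u.1 ∩ v.1) : ℕ) : ℕ∞) ≤ (adjGraph n d V).edist u v := by
  rw [edist_eq_sInf]
  refine le_sInf ?_
  rintro _ ⟨p, rfl⟩
  have := card_inter_le_card_inter_add_length hV p u.1
  rw [inter_self, hV u.1 u.2, inter_comm] at this
  exact Nat.cast_le.2 (by omega)

theorem adjGraph.edist_le_one (hV : ∀ u ∈ V, #u = d) {u v : {u // u ∈ V}}
    (huv : d - 1 ≤ #(u.1 ∩ v.1)) : (adjGraph n d V).edist u v ≤ 1 := by
  rw [edist_le_one_iff_adj_or_eq, or_iff_not_imp_right]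
  intro hne
  refine ⟨hne, le_antisymm ?_ huv⟩
  have hlt : #(u.1 ∩ v.1) < #u.1 := by
    refine card_lt_card (ssubset_of_subset_of_ne inter_subset_left fun h => hne ?_)
    exact Subtype.ext (eq_of_subset_of_card_le (inter_eq_left.1 h)
      (by rw [hV u.1 u.2, hV v.1 v.2]))
  rw [hV u.1 u.2] at hlt
  omega

theorem IsDualGraph.edist_le_three (hV : IsDualGraph d n V) (hn : n ≤ d + 3)
    (u v : {u // u ∈ V}) : (adjGraph n d V).edist u v ≤ 3 := by
  have hcard : ∀ x : {u // u ∈ V}, #x.1 = d := fun x => hV.card_eq x.1 x.2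
  by_cases hclose : d - 1 ≤ #(u.1 ∩ v.1)
  · exact (adjGraph.edist_le_one hV.card_eq hclose).trans (by norm_num)
  obtain ⟨w, hw⟩ := hV.locally_connected u v
  obtain ⟨⟨⟨x, y⟩, hxy⟩, hdart, hx, hy⟩ :=
    w.exists_boundary_dart {x | d - 1 ≤ #(x.1 ∩ u.1)}
      (by simp only [Set.mem_ofPred_eq, inter_self, hcard]; omega)
      (by rw [Set.mem_ofPred_eq, inter_comm]; exact hclose)
  simp only [Set.mem_ofPred_eq, not_le] at hx hy
  have hyv : d - 1 ≤ #(y.1 ∩ v.1) := by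
    have := card_add_card_add_card_le_of_inter_subset
      (hw y (w.dart_snd_mem_support_of_mem_darts hdart))
    rw [hcard, hcard, hcard, Fintype.card_fin] at this
    omega
  calc (adjGraph n d V).edist u v
      ≤ (adjGraph n d V).edist u x + (adjGraph n d V).edist x y
          + (adjGraph n d V).edist y v :=
        SimpleGraph.edist_triangle.trans (by gcongr; exact SimpleGraph.edist_triangle)
    _ ≤ 1 + 1 + 1 := by
        gcongr
        · exact adjGraph.edist_le_one hV.card_eq (by rwa [inter_comm])
        · exact (edist_eq_one_iff_adj.2 hxy).le
        · exact adjGraph.edist_le_one hV.card_eq hyv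
    _ = 3 := by norm_num

theorem IsDualGraph.ediam_le_three (hV : IsDualGraph d n V) (hn : n ≤ d + 3) :
    (adjGraph n d V).ediam ≤ 3 :=
  ediam_le_of_edist_le (hV.edist_le_three hn)

end DualGraph

theorem SimpleGraph.exists_walk_support_of_adj_succ {α : Type*} {G : SimpleGraph α} (g : ℕ → α)
    {i j : ℕ} (hij : i ≤ j) (hadj : ∀ m, i ≤ m → m < j → G.Adj (g m) (g (m + 1))) :
    ∃ w : G.Walk (g i) (g j), ∀ x ∈ w.support, ∃ m, i ≤ m ∧ m ≤ j ∧ g m = x := by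
  induction j, hij using Nat.le_induction with
  | base =>
    refine ⟨.nil, fun x hx => ⟨i, le_rfl, le_rfl, ?_⟩⟩
    rw [Walk.support_nil, List.mem_singleton] at hx
    exact hx.symm
  | succ j hij ih =>
    obtain ⟨w, hw⟩ := ih fun m h1 h2 => hadj m h1 (by omega)
    refine ⟨w.concat (hadj j hij (by omega)), fun x hx => ?_⟩
    simp only [Walk.support_concat, List.mem_append, List.mem_singleton] at hx
    rcases hx with hx | rfl
    · obtain ⟨m, h1, h2, rfl⟩ := hw x hx
      exact ⟨m, h1, by omega, rfl⟩
    · exact ⟨j + 1, by omega, le_rfl, rfl⟩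

theorem IsDualGraph.of_path {n d k : ℕ} {f : ℕ → Finset (Fin n)}
    (hcard : ∀ m ≤ k, #(f m) = d)
    (hadj : ∀ m < k, f m ≠ f (m + 1) ∧ #(f m ∩ f (m + 1)) = d - 1)
    (hconvex : ∀ i m j, i ≤ m → m ≤ j → j ≤ k → f i ∩ f j ⊆ f m) :
    IsDualGraph d n ((range (k + 1)).image f) := by
  set V := (range (k + 1)).image f
  have hmem : ∀ m, f (min m k) ∈ V := fun m => mem_image_of_mem f (mem_range.2 (by omega))
  let g : ℕ → {u // u ∈ V} := fun m => ⟨f (min m k), hmem m⟩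
  have hg : ∀ {m}, m ≤ k → (g m).1 = f m := fun h => by simp [g, min_eq_left h]
  have hwalk : ∀ i j, i ≤ j → j ≤ k →
      ∃ w : (adjGraph n d V).Walk (g i) (g j), ∀ x ∈ w.support, (g i).1 ∩ (g j).1 ⊆ x.1 := by
    intro i j hij hjk
    obtain ⟨w, hw⟩ := exists_walk_support_of_adj_succ (G := adjGraph n d V) g hij fun m _ hm => by
      obtain ⟨hne, hinter⟩ := hadj m (by omega)
      rw [← hg (by omega : m ≤ k), ← hg (by omega : m + 1 ≤ k)] at hne hinter
      exact ⟨fun h => hne (congrArg Subtype.val h), hinter⟩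
    refine ⟨w, fun x hx => ?_⟩
    obtain ⟨m, him, hmj, rfl⟩ := hw x hx
    rw [hg (hij.trans hjk), hg hjk, hg (hmj.trans hjk)]
    exact hconvex i m j him hmj hjk
  have hsurj : ∀ u : {u // u ∈ V}, ∃ m ≤ k, g m = u := by
    rintro ⟨u, hu⟩
    obtain ⟨m, hm, rfl⟩ := mem_image.1 hu
    rw [mem_range, Nat.lt_succ_iff] at hm
    exact ⟨m, hm, Subtype.ext (hg hm)⟩
  refine ⟨⟨f 0, mem_image_of_mem f (mem_range.2 k.succ_pos)⟩, ?_, fun u v => ?_⟩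
  · intro u hu
    obtain ⟨m, hm, rfl⟩ := mem_image.1 hu
    exact hcard m (Nat.lt_succ_iff.1 (mem_range.1 hm))
  obtain ⟨i, hik, rfl⟩ := hsurj u
  obtain ⟨j, hjk, rfl⟩ := hsurj v
  rcases le_total i j with hij | hji
  · exact hwalk i j hij hjk
  · obtain ⟨w, hw⟩ := hwalk j i hji hik
    exact ⟨w.reverse, fun x hx => inter_comm (g i).1 _ ▸ hw x (by simpa using hx)⟩

def pathTriple : ℕ → Finset (Fin 6)
  | 0 => {0, 1, 2}
  | 1 => {0, 1, 3}
  | 2 => {0, 3, 4}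
  | _ => {3, 4, 5}

theorem card_pathTriple (m : ℕ) : #(pathTriple m) = 3 := by
  unfold pathTriple
  split <;> rfl

def pathVertex (d : ℕ) (hd : 3 ≤ d) (m : ℕ) : Finset (Fin (d + 3)) :=
  ((pathTriple m).map (Fin.castLEEmb (Nat.add_le_add_right hd 3)))ᶜ

section PathVertex

variable {d : ℕ} (hd : 3 ≤ d)

theorem pathVertex_inter (i j : ℕ) : pathVertex d hd i ∩ pathVertex d hd j =
    ((pathTriple i ∪ pathTriple j).map (Fin.castLEEmb (Nat.add_le_add_right hd 3)))ᶜ := by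
  rw [pathVertex, pathVertex, map_union, compl_union]

theorem card_pathVertex (m : ℕ) : #(pathVertex d hd m) = d := by
  rw [pathVertex, card_compl, card_map, Fintype.card_fin, card_pathTriple]
  omega

theorem card_pathVertex_inter (i j : ℕ) :
    #(pathVertex d hd i ∩ pathVertex d hd j) = d + 3 - #(pathTriple i ∪ pathTriple j) := by
  rw [pathVertex_inter, card_compl, card_map, Fintype.card_fin]

theorem isDualGraph_pathVertex :
    IsDualGraph d (d + 3) ((range 4).image (pathVertex d hd)) := by
  refine IsDualGraph.of_path (k := 3) (fun m _ => card_pathVertex hd m) (fun m hm => ?_) ?_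
  · have hunion : ∀ m < 3, #(pathTriple m ∪ pathTriple (m + 1)) = 4 := by decide
    have hinter := card_pathVertex_inter hd m (m + 1)
    rw [hunion m hm] at hinter
    refine ⟨fun h => ?_, by omega⟩
    rw [← h, inter_self, card_pathVertex] at hinter
    omega
  · have hconvex : ∀ j ≤ 3, ∀ m ≤ j, ∀ i ≤ m, pathTriple m ⊆ pathTriple i ∪ pathTriple j := by
      decide
    intro i m j him hmj hjk
    rw [pathVertex_inter, pathVertex, compl_subset_compl, map_subset_map]
    exact hconvex j hjk m hmj i him

end PathVertex

theorem ediam_pathVertex {d : ℕ} (hd : 3 ≤ d) :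
    (adjGraph (d + 3) d ((range 4).image (pathVertex d hd))).ediam = 3 := by
  refine le_antisymm ((isDualGraph_pathVertex hd).ediam_le_three le_rfl) ?_
  have hends := adjGraph.sub_card_inter_le_edist (isDualGraph_pathVertex hd).card_eq
    ⟨_, mem_image_of_mem _ (by simp : 0 ∈ range 4)⟩
    ⟨_, mem_image_of_mem _ (by simp : 3 ∈ range 4)⟩
  rw [card_pathVertex_inter, (by decide : #(pathTriple 0 ∪ pathTriple 3) = 6),
    show d - (d + 3 - 6) = 3 by omega] at hends
  exact le_trans (by exact_mod_cast hends) edist_le_ediam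

/-- μ(d, d+3) = 3 for all d ≥ 3. -/
theorem mu_d_dplus3 (d : ℕ) (hd : 3 ≤ d) :
    (∀ V : Finset (Finset (Fin (d + 3))), IsDualGraph d (d + 3) V →
      (adjGraph (d + 3) d V).diam ≤ 3) ∧
    (∃ V : Finset (Finset (Fin (d + 3))), IsDualGraph d (d + 3) V ∧
      (adjGraph (d + 3) d V).diam = 3) := by
  refine ⟨fun V hV => ?_, _, isDualGraph_pathVertex hd, by simp [diam, ediam_pathVertex hd]⟩
  simpa [diam] using ENat.toNat_le_toNat (hV.ediam_le_three le_rfl) (by simp)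
end
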